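/- For any infinite Φ-structure A, function variable p, and immediate terms z_1,...,z_m, w_1, w_2, w_3: A ⊨ p(z_1,...,z_m) = (if w_1 then w_2 else w_3) if and only if p(z_1,...,z_m) ≡ w_1 ≡ w_2 ≡ w_3 (all four terms syntactically identical). -/

import Mathlib

namespace McCarthy

/-- Sorts: individual (`ind`) and Boolean (`bool`). -/
inductive Srt where
  | ind | bool
deriving DecidableEq

/-- A function variable is identified by its sort, arity and index. -/
abbrev FV : Type := Srt × ℕ × ℕ

/-- Explicit terms over a vocabulary `Φ`. -/
inductive Term (Φ : Type) where
  | tt : Term Φ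
  | ff : Term Φ
  | ivar : ℕ → Term Φ
  | fapp : FV → List (Term Φ) → Term Φ
  | prim : Φ → List (Term Φ) → Term Φ
  | cond : Srt → Term Φ → Term Φ → Term Φ → Term Φ

variable {Φ : Type}

def isIvar : Term Φ → Bool
  | .ivar _ => true
  | _ => false

/-- Immediate terms: individual variables, or function variables applied to
individual variables (nullary function variables included). -/
def isImmediate : Term Φ → Bool
  | .ivar _ => true
  | .fapp p args => (args.all isIvar) && (args.length == p.2.1)
  | _ => false

/-- Irreducible terms: immediate terms, Boolean constants, or applications
with immediate arguments. -/
def isIrreducible : Term Φ → Bool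
  | .tt => true
  | .ff => true
  | .ivar _ => true
  | .fapp p args => ((args.all isIvar) && (args.length == p.2.1)) || args.all isImmediate
  | .prim _ args => args.all isImmediate
  | .cond _ a b c => isImmediate a && isImmediate b && isImmediate c

/-- The sort of an immediate (or irreducible non-`prim`) term. -/
def immSort : Term Φ → Srt
  | .tt => .bool
  | .ff => .bool
  | .fapp p _ => p.1
  | .cond s _ _ _ => s
  | _ => .ind

mutual
/-- `sizeT E` counts the occurrences of non-immediate proper subterms of `E`. -/
def sizeT : Term Φ → ℕ
  | .tt => 0
  | .ff => 0
  | .ivar _ => 0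
  | .fapp _ args => sizeTL args
  | .prim _ args => sizeTL args
  | .cond _ a b c =>
      (sizeT a + (if isImmediate a then 0 else 1)) +
      (sizeT b + (if isImmediate b then 0 else 1)) +
      (sizeT c + (if isImmediate c then 0 else 1))

def sizeTL : List (Term Φ) → ℕ
  | [] => 0
  | t :: ts => (sizeT t + (if isImmediate t then 0 else 1)) + sizeTL ts
end

mutual
/-- Renaming of function variables. -/
def renameF (ρ : FV → FV) : Term Φ → Term Φ
  | .tt => .tt
  | .ff => .ff
  | .ivar i => .ivar i
  | .fapp p args => .fapp (ρ p) (renameFL ρ args)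
  | .prim f args => .prim f (renameFL ρ args)
  | .cond s a b c => .cond s (renameF ρ a) (renameF ρ b) (renameF ρ c)

def renameFL (ρ : FV → FV) : List (Term Φ) → List (Term Φ)
  | [] => []
  | t :: ts => renameF ρ t :: renameFL ρ ts
end

mutual
/-- Renaming of individual variables. -/
def renameV (σ : ℕ → ℕ) : Term Φ → Term Φ
  | .tt => .tt
  | .ff => .ff
  | .ivar i => .ivar (σ i)
  | .fapp p args => .fapp p (renameVL σ args)
  | .prim f args => .prim f (renameVL σ args)
  | .cond s a b c => .cond s (renameV σ a) (renameV σ b) (renameV σ c)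

def renameVL (σ : ℕ → ℕ) : List (Term Φ) → List (Term Φ)
  | [] => []
  | t :: ts => renameV σ t :: renameVL σ ts
end

mutual
/-- Does the function variable `q` occur in the term? -/
def occursF (q : FV) : Term Φ → Bool
  | .tt => false
  | .ff => false
  | .ivar _ => false
  | .fapp p args => (decide (p = q)) || occursFL q args
  | .prim _ args => occursFL q args
  | .cond _ a b c => occursF q a || occursF q b || occursF q c

def occursFL (q : FV) : List (Term Φ) → Bool
  | [] => false
  | t :: ts => occursF q t || occursFL q ts
end


/-! ## Extended recursive programs -/

/-- A body equation `p(x⃗) = rhs`. -/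
structure Eqn (Φ : Type) where
  p : FV
  xs : List ℕ
  rhs : Term Φ

/-- An extended recursive program `E₀(x⃗) where { p₁(x⃗₁) = E₁, …, p_K(x⃗_K) = E_K }`,
with the body represented as a multiset (set representation of the paper). -/
structure ExtProg (Φ : Type) where
  fvars : List ℕ
  head : Term Φ
  body : Multiset (Eqn Φ)

/-- The function variables bound by the body of a program. -/
def bodyPvars (E : ExtProg Φ) : Multiset FV := E.body.map Eqn.p

/-- `q` is fresh for `E`: it is not a recursion variable of `E` and occurs nowhere in `E`. -/
def FreshIn (q : FV) (E : ExtProg Φ) : Prop :=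
  occursF q E.head = false ∧ ∀ e ∈ E.body, e.p ≠ q ∧ occursF q e.rhs = false

/-- The argument list of an application term (the empty list otherwise). -/
def argsOf : Term Φ → List (Term Φ)
  | .fapp _ as => as
  | .prim _ as => as
  | .cond _ a b c => [a, b, c]
  | _ => []

/-- Replace the argument list of an application term. -/
def withArgs : Term Φ → List (Term Φ) → Term Φ
  | .fapp p _, as => .fapp p as
  | .prim f _, as => .prim f as
  | .cond s _ _ _, [a, b, c] => .cond s a b c
  | t, _ => t

def isApp : Term Φ → Bool
  | .fapp _ _ => true
  | .prim _ _ => true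
  | .cond _ _ _ _ => true
  | _ => false

/-- Labels `(p, j, q)` of arrow reductions. -/
abbrev Lbl : Type := FV × ℕ × FV

/-- The arrow-reduction relation `E(x⃗) →^{(p,j,q)} F(x⃗)` on extended programs:
either a non-immediate `j`-th argument of the (outermost application) right-hand side
of the body equation for `p` is split off into a new equation for the fresh variable `q`
(body case), or — when `p` is fresh, serving merely as a marker — the non-immediate
`j`-th argument of the head is split off (head case). -/
inductive Step : Lbl → ExtProg Φ → ExtProg Φ → Prop where
  | body (p : FV) (j : ℕ) (q : FV) (E F : ExtProg Φ) (s : Multiset (Eqn Φ)) (e : Eqn Φ)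
      (G : Term Φ)
      (hbody : E.body = s + {e}) (hp : e.p = p) (happ : isApp e.rhs = true)
      (hG : (argsOf e.rhs)[j]? = some G) (himm : isImmediate G = false)
      (hq : FreshIn q E) (har : q.2.1 = e.xs.length)
      (hF : F = ⟨E.fvars, E.head,
        s + {⟨p, e.xs, withArgs e.rhs ((argsOf e.rhs).set j (.fapp q (e.xs.map Term.ivar)))⟩,
             ⟨q, e.xs, G⟩}⟩) :
      Step (p, j, q) E F
  | head (p : FV) (j : ℕ) (q : FV) (E F : ExtProg Φ) (G : Term Φ)
      (hp : FreshIn p E) (hq : FreshIn q E) (hpq : p ≠ q) (happ : isApp E.head = true)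
      (hG : (argsOf E.head)[j]? = some G) (himm : isImmediate G = false)
      (har : q.2.1 = E.fvars.length)
      (hF : F = ⟨E.fvars,
        withArgs E.head ((argsOf E.head).set j (.fapp q (E.fvars.map Term.ivar))),
        E.body + {⟨q, E.fvars, G⟩}⟩) :
      Step (p, j, q) E F

/-- One-step reduction: arrow reduction for some label. -/
def Step1 (E F : ExtProg Φ) : Prop := ∃ l : Lbl, Step l E F

/-- The `~_E` relation on function variables used in the Amalgamation Lemma:
`p ~_E p'` iff both are the same recursion variable of `E` (body case) or
neither is a recursion variable of `E` (head case). -/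
def SameCase (E : ExtProg Φ) (p p' : FV) : Prop :=
  (p = p' ∧ p ∈ bodyPvars E) ∨ (p ∉ bodyPvars E ∧ p' ∉ bodyPvars E)

/-- Size of an extended program: total number of occurrences of non-immediate
proper subterms of its parts. -/
def sizeP (E : ExtProg Φ) : ℕ := sizeT E.head + (E.body.map (fun e => sizeT e.rhs)).sum

/-- An extended program is irreducible if all its parts are irreducible terms. -/
def IrrProg (E : ExtProg Φ) : Prop :=
  isIrreducible E.head = true ∧ ∀ e ∈ E.body, isIrreducible e.rhs = true

/-! ## Congruence -/

/-- `ρ` preserves sorts and arities of function variables. -/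
def SortArityPres (ρ : FV → FV) : Prop := ∀ v : FV, (ρ v).1 = v.1 ∧ (ρ v).2.1 = v.2.1

/-- One equation is obtained from another by renaming the (bound) individual
variables and applying a renaming `ρ` of the function variables. -/
def EqnCong (ρ : FV → FV) (e f : Eqn Φ) : Prop :=
  f.p = ρ e.p ∧ ∃ σ : ℕ → ℕ,
    (∀ a ∈ e.xs, ∀ b ∈ e.xs, σ a = σ b → a = b) ∧
    f.xs = e.xs.map σ ∧ f.rhs = renameV σ (renameF ρ e.rhs)

/-- Congruence of extended programs: an alphabetic change of the bound individual
and function variables together with a permutation of the body equations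
(the latter being automatic in the multiset representation). -/
def Congruent (E F : ExtProg Φ) : Prop :=
  ∃ ρ : FV → FV, Function.Bijective ρ ∧ SortArityPres ρ ∧
    (∀ p : FV, p ∉ bodyPvars E → ρ p = p) ∧
    F.fvars = E.fvars ∧ F.head = renameF ρ E.head ∧
    Multiset.Rel (EqnCong ρ) E.body F.body

/-- Full reduction: a (possibly empty) chain of one-step reductions followed by a
congruence, i.e. `E ≡_c F` or `E →₁ ⋯ →₁ F' ≡_c F`. -/
def Reduces (E F : ExtProg Φ) : Prop :=
  ∃ G : ExtProg Φ, Relation.ReflTransGen Step1 E G ∧ Congruent G F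


/-! ## Semantics -/

section Semantics

variable {A : Type}

/-- An environment for the function variables: a partial function
`Aⁿ ⇀ A ⊕ Bool` for each function variable (`none` = divergence). -/
abbrev Env (A : Type) : Type := FV → List A → Option (A ⊕ Bool)

/-- A `Φ`-structure on the universe `A`: a partial interpretation of each
primitive (`Sum.inl` for sort `ind`, `Sum.inr` for sort `bool`). -/
abbrev Struc (Φ A : Type) : Type := Φ → List A → Option (A ⊕ Bool)

/-- An environment is sort- and arity-respecting. -/
def GoodEnv (env : Env A) : Prop :=
  ∀ p : FV, ∀ as v, env p as = some v →
    as.length = p.2.1 ∧ (p.1 = Srt.ind → ∃ a, v = Sum.inl a) ∧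
    (p.1 = Srt.bool → ∃ b, v = Sum.inr b)

/-- A structure is sort- and arity-respecting. -/
def GoodStruc (St : Struc Φ A) (arΦ : Φ → ℕ) (sΦ : Φ → Srt) : Prop :=
  ∀ φ as v, St φ as = some v →
    as.length = arΦ φ ∧ (sΦ φ = Srt.ind → ∃ a, v = Sum.inl a) ∧
    (sΦ φ = Srt.bool → ∃ b, v = Sum.inr b)

/-- A structure is total (on arguments of the right arity). -/
def TotalStruc (St : Struc Φ A) (arΦ : Φ → ℕ) : Prop :=
  ∀ φ as, as.length = arΦ φ → (St φ as).isSome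

mutual
/-- Kleene evaluation of terms: `none` means divergence; arguments of
applications are evaluated strictly and must be of sort `ind`; the conditional
evaluates its test first and then the selected branch. -/
def eval (St : Struc Φ A) (iv : ℕ → A) (env : Env A) : Term Φ → Option (A ⊕ Bool)
  | .tt => some (Sum.inr true)
  | .ff => some (Sum.inr false)
  | .ivar i => some (Sum.inl (iv i))
  | .fapp p args =>
      match evalArgs St iv env args with
      | none => none
      | some as => env p as
  | .prim f args =>
      match evalArgs St iv env args with
      | none => none
      | some as => St f as
  | .cond _ a b c =>
      match eval St iv env a with
      | some (Sum.inr true) => eval St iv env b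
      | some (Sum.inr false) => eval St iv env c
      | _ => none

def evalArgs (St : Struc Φ A) (iv : ℕ → A) (env : Env A) :
    List (Term Φ) → Option (List A)
  | [] => some []
  | t :: ts =>
      match eval St iv env t with
      | some (Sum.inl a) =>
          match evalArgs St iv env ts with
          | some as => some (a :: as)
          | none => none
      | _ => none
end

/-- Validity of the identity `E = F` in the structure: Kleene strong equality
under every assignment of individuals to the individual variables and of
sort-respecting partial functions to the function variables. -/
def Valid (St : Struc Φ A) (E F : Term Φ) : Prop :=
  ∀ (iv : ℕ → A) (env : Env A), GoodEnv env → eval St iv env E = eval St iv env F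

/-- An individual variable is *placed* in the identity
`φ(zs₁) = ψ(zs₂)` if it is one of the listed immediate arguments. -/
def Placed (zs₁ zs₂ : List (Term Φ)) (s : ℕ) : Prop := Term.ivar s ∈ zs₁ ++ zs₂

/-- Injective validity `A ⊨_inj φ(zs₁) = ψ(zs₂)`: validity under all
assignments which are injective on the placed individual variables. -/
def ValidInjId (St : Struc Φ A) (φ ψ : Φ) (zs₁ zs₂ : List (Term Φ)) : Prop :=
  ∀ (iv : ℕ → A) (env : Env A), GoodEnv env →
    (∀ s t, Placed zs₁ zs₂ s → Placed zs₁ zs₂ t → iv s = iv t → s = t) →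
    eval St iv env (.prim φ zs₁) = eval St iv env (.prim ψ zs₂)

/-- Bind the variables `xs` to the values `as` on top of the assignment `iv`. -/
def bindList (xs : List ℕ) (as : List A) (iv : ℕ → A) (i : ℕ) : A :=
  match xs.findIdx? (· = i) with
  | some k => as.getD k (iv i)
  | none => iv i

/-- `env` solves the system of recursive equations in the body of `E`. -/
def Solves (St : Struc Φ A) (iv : ℕ → A) (E : ExtProg Φ) (env : Env A) : Prop :=
  ∀ e ∈ E.body, ∀ as : List A, as.length = e.xs.length →
    env e.p as = eval St (bindList e.xs as iv) env e.rhs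

/-- The pointwise partial-function (information) ordering on environments. -/
def envLE (env env' : Env A) : Prop :=
  ∀ p as, env p as = none ∨ env p as = env' p as

/-- `Den St iv E w` : the denotation of the extended program `E` at the
assignment `iv` is `w`, computed by evaluating the head at the least solution
of the body. -/
def Den (St : Struc Φ A) (iv : ℕ → A) (E : ExtProg Φ) (w : Option (A ⊕ Bool)) : Prop :=
  ∃ env : Env A, Solves St iv E env ∧ (∀ env', Solves St iv E env' → envLE env env') ∧
    eval St iv env E.head = w

/-! ## Recursors and intensions -/

/-- The renaming of individual variables matching the list `xs` with the list `ys`. -/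
def bindRen (xs ys : List ℕ) (i : ℕ) : ℕ :=
  match xs.findIdx? (· = i) with
  | some k => ys.getD k i
  | none => i

/-- The parts of two irreducible programs define the same functional, modulo the
renaming `ρ` of the recursion variables and the matching of the bound individual
variables. -/
def EqnSemEq (St : Struc Φ A) (ρ : FV → FV) (e f : Eqn Φ) : Prop :=
  e.p = ρ f.p ∧ e.xs.length = f.xs.length ∧
  ∀ (iv : ℕ → A) (env : Env A), GoodEnv env →
    eval St iv env e.rhs = eval St iv env (renameV (bindRen f.xs e.xs) (renameF ρ f.rhs))

/-- The recursors of `E` and `F` on the structure are equal (strongly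
isomorphic): the bodies match up to a sort- and arity-preserving bijection of the
recursion variables, with the corresponding parts denoting the same functionals. -/
def RecEq (St : Struc Φ A) (E F : ExtProg Φ) : Prop :=
  ∃ ρ : FV → FV, Function.Bijective ρ ∧ SortArityPres ρ ∧
    (∀ (iv : ℕ → A) (env : Env A), GoodEnv env →
      eval St iv env E.head = eval St iv env (renameF ρ F.head)) ∧
    Multiset.Rel (EqnSemEq St ρ) E.body F.body

/-- Intensional equivalence on a structure: the referential intensions (the
recursors of the canonical forms) of the two programs are equal. -/
def IntEqOn (St : Struc Φ A) (E F : ExtProg Φ) : Prop :=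
  ∃ E' F' : ExtProg Φ, Reduces E E' ∧ IrrProg E' ∧ Reduces F F' ∧ IrrProg F' ∧
    RecEq St E' F'

end Semantics

/-- Global intensional equivalence: equal referential intensions in every
infinite `Φ`-structure. -/
def GlobalIntEq (E F : ExtProg Φ) : Prop :=
  ∀ (A : Type) (St : Struc Φ A), Infinite A → IntEqOn St E F

/-- A program is proper if none of its parts is an immediate term of Boolean sort. -/
def ProperProg (E : ExtProg Φ) : Prop :=
  ¬(isImmediate E.head = true ∧ immSort E.head = Srt.bool) ∧
  ∀ e ∈ E.body, ¬(isImmediate e.rhs = true ∧ immSort e.rhs = Srt.bool)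


/-! ## Pure algebraic terms (Statement 0) -/

/-- Pure algebraic terms: built only from individual variables and function
variables of sort `ind` (of the correct arities) by application. -/
inductive PureAlg : Term Φ → Prop where
  | ivar (i : ℕ) : PureAlg (.ivar i)
  | fapp (n i : ℕ) (args : List (Term Φ)) (hargs : ∀ t ∈ args, PureAlg t)
      (hlen : args.length = n) : PureAlg (.fapp (Srt.ind, n, i) args)

/-! ## Bare identities (Statements 14, 16) -/

/-- A term is an individual variable or a nullary function variable of sort `ind`. -/
def BareVarT (t : Term Φ) : Prop :=
  (∃ i, t = Term.ivar i) ∨ (∃ i, t = Term.fapp (Srt.ind, 0, i) [])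

/-- A bare variable: `(false, i)` codes the individual variable `v_i`,
`(true, i)` codes the nullary function variable `p^{ind,0}_i`. -/
abbrev BareVar : Type := Bool × ℕ

/-- Canonical choice of bare variables: each variable occurring for the first
time is the first unused variable of its kind in the fixed alternating list
`v₀, p₀, v₁, p₁, …`. -/
def CanonicalBare (xs : List BareVar) : Prop :=
  ∀ i x, xs[i]? = some x → (∀ j < i, xs[j]? ≠ some x) →
    x.2 = (((xs.take i).filter (fun y => y.1 == x.1)).dedup).length

/-- The representative function of an equivalence relation `r` on the placed
variables: a placed variable is sent to the least element of its class. -/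
noncomputable def repFun (placed : ℕ → Prop) (r : ℕ → ℕ → Prop) (s : ℕ) : ℕ :=
  open Classical in
  if placed s then sInf {j | r s j} else s

/-! ## Propositional programs coding graphs (Statement 19) -/

/-- The propositional variable `r`. -/
def rVar : FV := (Srt.bool, 0, 0)

/-- The propositional variable `p_i`. -/
def pVar (n : ℕ) (i : Fin n) : FV := (Srt.bool, 0, 1 + (i : ℕ))

/-- The propositional variable `p_{ij}`. -/
def pijVar (n : ℕ) (i j : Fin n) : FV := (Srt.bool, 0, 1 + n + ((i : ℕ) * n + (j : ℕ)))

/-- The part `E_{ij}` of the program coding the graph `E`. -/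
def edgeTerm (n : ℕ) (E : Fin n → Fin n → Bool) (i j : Fin n) : Term Empty :=
  if E i j then
    .cond Srt.bool (.fapp (pVar n i) []) (.fapp (pVar n j) []) (.fapp rVar [])
  else
    .cond Srt.bool (.fapp (pVar n i) []) (.fapp rVar []) (.fapp (pVar n j) [])

/-- The irreducible propositional program `prog(E)` coding the graph `E`:
`true where { p_i = p_i : i < n } ∪ { p_{ij} = E_{ij} : i,j < n } ∪ { r = false }`. -/
def graphProg (n : ℕ) (E : Fin n → Fin n → Bool) : ExtProg Empty where
  fvars := []
  head := .tt
  body :=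
    (Finset.univ.val.map (fun i : Fin n => (⟨pVar n i, [], .fapp (pVar n i) []⟩ : Eqn Empty)))
    + ((Finset.univ.val (α := Fin n × Fin n)).map
        (fun ij => (⟨pijVar n ij.1 ij.2, [], edgeTerm n E ij.1 ij.2⟩ : Eqn Empty)))
    + {⟨rVar, [], .ff⟩}

/-! Evaluate both sides under an injective assignment `iv` of the individual variables and an
environment in which every individual-sorted function variable is the constant `a₀ ∉ range iv`,
while the Boolean ones diverge everywhere except that `p` takes a chosen value `b` at the tuple
of values of `z⃗`. The left side then converges, hence so does the test `w₁`, which forces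
`w₁ ≡ p(z⃗)`; with `b = true` and `b = false` the selected branch must converge to `b`, which
forces `w₂ ≡ p(z⃗)` and `w₃ ≡ p(z⃗)`. Conversely `if t then t else t` agrees with `t` for every
Boolean `t`. -/

section Immediate

variable {Φ : Type}

lemma isImmediate_cases {z : Term Φ} (h : isImmediate z = true) :
    (∃ i, z = .ivar i) ∨
      ∃ q us, z = .fapp q us ∧ (∀ u ∈ us, isIvar u = true) ∧ us.length = q.2.1 := by
  cases z <;> simp_all [isImmediate]

lemma exists_eq_ivar_of_isIvar {u : Term Φ} (h : isIvar u = true) : ∃ i, u = .ivar i := by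
  cases u <;> simp [isIvar] at h ⊢

lemma isImmediate_ind_of_isIvar {u : Term Φ} (h : isIvar u = true) :
    isImmediate u = true ∧ immSort u = .ind := by
  obtain ⟨i, rfl⟩ := exists_eq_ivar_of_isIvar h
  exact ⟨rfl, rfl⟩

end Immediate

section ProbeEnv

variable {Φ A : Type}

def probeVal (iv : ℕ → A) (a₀ : A) : Term Φ → A
  | .ivar i => iv i
  | _ => a₀

open Classical in
noncomputable def probeEnv (a₀ : A) (p : FV) (tgt : List A) (b : Bool) : Env A := fun q as =>
  if as.length = q.2.1 then
    match q.1 with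
    | .ind => some (.inl a₀)
    | .bool => if q = p ∧ as = tgt then some (.inr b) else none
  else none

variable {a₀ : A} {p : FV} {tgt : List A} {b : Bool}

lemma goodEnv_probeEnv : GoodEnv (probeEnv a₀ p tgt b) := by
  rintro ⟨_ | _, m, i⟩ as v h <;> simp only [probeEnv] at h <;> split_ifs at h <;> aesop

lemma probeEnv_of_ind {q : FV} {as : List A} (hq : q.1 = .ind) (has : as.length = q.2.1) :
    probeEnv a₀ p tgt b q as = some (.inl a₀) := by
  obtain ⟨_ | _, m, i⟩ := q <;> simp_all [probeEnv]

lemma probeEnv_self_of_bool (hp : p.1 = .bool) (h : tgt.length = p.2.1) :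
    probeEnv a₀ p tgt b p tgt = some (.inr b) := by
  obtain ⟨_ | _, m, i⟩ := p <;> simp_all [probeEnv]

lemma probeEnv_self_isSome (h : tgt.length = p.2.1) : (probeEnv a₀ p tgt b p tgt).isSome := by
  obtain ⟨_ | _, m, i⟩ := p <;> simp_all [probeEnv]

lemma eq_of_probeEnv_isSome {q : FV} {as : List A} (hq : q.1 = .bool)
    (h : (probeEnv a₀ p tgt b q as).isSome) : q = p ∧ as = tgt := by
  obtain ⟨_ | _, m, i⟩ := q <;> simp only [probeEnv] at h <;> split_ifs at h <;> simp_all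

end ProbeEnv

section Eval

variable {Φ A : Type} (St : Struc Φ A) (iv : ℕ → A) (env : Env A)

lemma evalArgs_eq_some_map {g : Term Φ → A} {ts : List (Term Φ)}
    (h : ∀ t ∈ ts, eval St iv env t = some (.inl (g t))) :
    evalArgs St iv env ts = some (ts.map g) := by
  induction ts with
  | nil => simp [evalArgs]
  | cons t ts ih => simp_all [evalArgs]

variable {St iv env}

lemma isSome_eval_of_isSome_eval_cond {s : Srt} {a x y : Term Φ}
    (h : (eval St iv env (.cond s a x y)).isSome) : (eval St iv env a).isSome := by
  rw [eval] at h
  split at h <;> simp_all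

lemma eval_cond_of_eval_eq_inr {s : Srt} {a x y : Term Φ} {b : Bool}
    (h : eval St iv env a = some (.inr b)) :
    eval St iv env (.cond s a x y) = eval St iv env (bif b then x else y) := by
  cases b <;> simp [eval, h]

lemma eval_cond_self {s : Srt} {t : Term Φ} (h : ∀ a, eval St iv env t ≠ some (.inl a)) :
    eval St iv env (.cond s t t t) = eval St iv env t := by
  rw [eval]
  rcases ht : eval St iv env t with _ | _ | _ | _ <;> simp_all

lemma eval_fapp_ne_inl (henv : GoodEnv env) {p : FV} (hp : p.1 = .bool) (zs : List (Term Φ))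
    (a : A) : eval St iv env (.fapp p zs) ≠ some (.inl a) := by
  intro h
  rw [eval] at h
  split at h
  · simp at h
  · obtain ⟨b, hb⟩ := (henv p _ _ h).2.2 hp
    exact Sum.inl_ne_inr hb

theorem valid_cond_self {p : FV} (hp : p.1 = .bool) (zs : List (Term Φ)) (s : Srt) :
    Valid St (.fapp p zs) (.cond s (.fapp p zs) (.fapp p zs) (.fapp p zs)) :=
  fun _ _ henv => (eval_cond_self (eval_fapp_ne_inl henv hp zs)).symm

end Eval

section Probe

variable {Φ A : Type} {St : Struc Φ A} {iv : ℕ → A} {a₀ : A} {p : FV} {tgt : List A} {b : Bool}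

lemma eval_probeEnv_of_immSort_ind {z : Term Φ} (hz : isImmediate z = true)
    (hs : immSort z = .ind) :
    eval St iv (probeEnv a₀ p tgt b) z = some (.inl (probeVal iv a₀ z)) := by
  rcases isImmediate_cases hz with ⟨i, rfl⟩ | ⟨q, us, rfl, hus, hlen⟩
  · rfl
  · have hargs : evalArgs St iv (probeEnv a₀ p tgt b) us = some (us.map (probeVal iv a₀)) :=
      evalArgs_eq_some_map St iv _ fun u hu => by
        obtain ⟨i, rfl⟩ := exists_eq_ivar_of_isIvar (hus u hu)
        rfl
    rw [eval, hargs]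
    exact probeEnv_of_ind hs (by simpa using hlen)

lemma evalArgs_probeEnv {zs : List (Term Φ)}
    (hzs : ∀ z ∈ zs, isImmediate z = true ∧ immSort z = .ind) :
    evalArgs St iv (probeEnv a₀ p tgt b) zs = some (zs.map (probeVal iv a₀)) :=
  evalArgs_eq_some_map St iv _ fun z hz => eval_probeEnv_of_immSort_ind (hzs z hz).1 (hzs z hz).2

lemma eval_probeEnv_fapp {zs : List (Term Φ)}
    (hzs : ∀ z ∈ zs, isImmediate z = true ∧ immSort z = .ind) :
    eval St iv (probeEnv a₀ p tgt b) (.fapp p zs) =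
      probeEnv a₀ p tgt b p (zs.map (probeVal iv a₀)) := by
  rw [eval, evalArgs_probeEnv hzs]

variable (hiv : Function.Injective iv) (ha₀ : ∀ i, iv i ≠ a₀)
include hiv ha₀

lemma eq_of_probeVal_eq {u z : Term Φ} (hu : isIvar u = true)
    (hz : isImmediate z = true ∧ immSort z = .ind) (h : probeVal iv a₀ u = probeVal iv a₀ z) :
    u = z := by
  obtain ⟨i, rfl⟩ := exists_eq_ivar_of_isIvar hu
  rcases isImmediate_cases hz.1 with ⟨j, rfl⟩ | ⟨q, us, rfl, -, -⟩
  · rw [hiv h]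
  · exact absurd h (ha₀ i)

lemma eq_of_map_probeVal_eq {us zs : List (Term Φ)} (hus : ∀ u ∈ us, isIvar u = true)
    (hzs : ∀ z ∈ zs, isImmediate z = true ∧ immSort z = .ind)
    (h : us.map (probeVal iv a₀) = zs.map (probeVal iv a₀)) : us = zs := by
  induction us generalizing zs with
  | nil => exact (List.map_eq_nil_iff.mp h.symm).symm
  | cons u us ih =>
    obtain _ | ⟨z, zs⟩ := zs
    · simp at h
    simp only [List.map_cons, List.cons.injEq] at h
    simp only [List.mem_cons, forall_eq_or_imp] at hus hzs
    rw [eq_of_probeVal_eq hiv ha₀ hus.1 hzs.1 h.1, ih hus.2 hzs.2 h.2]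

lemma eq_fapp_of_isSome_eval_probeEnv {zs : List (Term Φ)} {w : Term Φ}
    (hzs : ∀ z ∈ zs, isImmediate z = true ∧ immSort z = .ind)
    (hw : isImmediate w = true) (hws : immSort w = .bool)
    (h : (eval St iv (probeEnv a₀ p (zs.map (probeVal iv a₀)) b) w).isSome) :
    w = .fapp p zs := by
  rcases isImmediate_cases hw with ⟨i, rfl⟩ | ⟨q, us, rfl, hus, -⟩
  · simp [immSort] at hws
  rw [eval, evalArgs_probeEnv fun u hu => isImmediate_ind_of_isIvar (hus u hu)] at h
  obtain ⟨rfl, hval⟩ := eq_of_probeEnv_isSome hws h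
  rw [eq_of_map_probeVal_eq hiv ha₀ hus hzs hval]

theorem eq_of_valid_fapp_cond {zs : List (Term Φ)} {s : Srt} {w₁ w₂ w₃ : Term Φ}
    (hzs : ∀ z ∈ zs, isImmediate z = true ∧ immSort z = .ind)
    (himm : isImmediate w₁ = true ∧ isImmediate w₂ = true ∧ isImmediate w₃ = true)
    (hw₁ : immSort w₁ = .bool) (hw₂ : immSort w₂ = s) (hw₃ : immSort w₃ = s)
    (hlen : zs.length = p.2.1) (hps : p.1 = s)
    (hV : Valid St (.fapp p zs) (.cond s w₁ w₂ w₃)) :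
    Term.fapp p zs = w₁ ∧ w₁ = w₂ ∧ w₁ = w₃ := by
  set tgt := zs.map (probeVal iv a₀)
  have htgt : tgt.length = p.2.1 := by simpa [tgt] using hlen
  have hV' (b : Bool) : probeEnv a₀ p tgt b p tgt =
      eval St iv (probeEnv a₀ p tgt b) (.cond s w₁ w₂ w₃) :=
    (eval_probeEnv_fapp hzs).symm.trans (hV iv _ goodEnv_probeEnv)
  have hw₁p : w₁ = .fapp p zs := by
    have htest : (eval St iv (probeEnv a₀ p tgt true) (.cond s w₁ w₂ w₃)).isSome := by
      rw [← hV']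
      exact probeEnv_self_isSome htgt
    exact eq_fapp_of_isSome_eval_probeEnv hiv ha₀ hzs himm.1 hw₁
      (isSome_eval_of_isSome_eval_cond htest)
  have hpb : p.1 = .bool := by rwa [hw₁p] at hw₁
  subst hw₁p hps
  have hbranch (b : Bool) :
      eval St iv (probeEnv a₀ p tgt b) (bif b then w₂ else w₃) = some (.inr b) := by
    have hleft := probeEnv_self_of_bool (a₀ := a₀) (b := b) hpb htgt
    rw [← eval_cond_of_eval_eq_inr (s := p.1) ((eval_probeEnv_fapp hzs).trans hleft), ← hV',
      hleft]
  have hbranch_eq (b : Bool) (w : Term Φ) (hw : isImmediate w = true) (hws : immSort w = p.1)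
      (hb : eval St iv (probeEnv a₀ p tgt b) w = some (.inr b)) : Term.fapp p zs = w :=
    (eq_fapp_of_isSome_eval_probeEnv hiv ha₀ hzs hw (hws.trans hpb) (by rw [hb]; rfl)).symm
  exact ⟨rfl, hbranch_eq true w₂ himm.2.1 hw₂ (hbranch true),
    hbranch_eq false w₃ himm.2.2 hw₃ (hbranch false)⟩

end Probe

/-- **form 2–3.** In any infinite `Φ`-structure, an identity
`p(z₁,…,z_m) = if w₁ then w₂ else w₃` with immediate parts is valid iff
`p(z₁,…,z_m) ≡ w₁ ≡ w₂ ≡ w₃`. -/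
theorem statement9 {Φ A : Type} [Infinite A] (St : Struc Φ A)
    (p : FV) (zs : List (Term Φ)) (s : Srt) (w₁ w₂ w₃ : Term Φ)
    (hz : ∀ z ∈ zs, isImmediate z = true ∧ immSort z = Srt.ind)
    (himm : isImmediate w₁ = true ∧ isImmediate w₂ = true ∧ isImmediate w₃ = true)
    (hw₁ : immSort w₁ = Srt.bool) (hw₂ : immSort w₂ = s) (hw₃ : immSort w₃ = s)
    (hlen : zs.length = p.2.1) (hps : p.1 = s) :
    Valid St (.fapp p zs) (.cond s w₁ w₂ w₃) ↔
      (Term.fapp p zs = w₁ ∧ w₁ = w₂ ∧ w₁ = w₃) := by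
  let e := Infinite.natEmbedding A
  have hiv : Function.Injective fun n => e (n + 1) := fun m n h => by simpa using e.injective h
  have ha₀ (n : ℕ) : e (n + 1) ≠ e 0 := fun h => by simpa using e.injective h
  constructor
  · exact eq_of_valid_fapp_cond hiv ha₀ hz himm hw₁ hw₂ hw₃ hlen hps
  · rintro ⟨rfl, rfl, rfl⟩
    exact valid_cond_self hw₁ zs s

end McCarthy
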